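/- There exists a universal constant C > 0 such that for all α > 0, all a ≥ 0, and all 0 ≤ r ≤ min{1, 1/(2α)}, setting p(t) := 1 + e^{−2αt}, one has ∫₀^r t^{−(1−1/p(t))} · a^{2/p(t)−1} dt ≤ (1/√α) · C(1+a)/(1 + log⁺(1/a))^{1/2}. -/

import Mathlib

/-!
For `0 < t ≤ r` we have `1 < p(t) ≤ 2`, so the power of `t` is at least `-1/2`, while
`2 / p(t) - 1 = tanh (α t) ≥ α t / 2` because `2 α t ≤ 1`. With `L = log⁺ (1 / a)` the integrand
is therefore at most `(1 + a) t^{-1/2} e^{-α L t / 2}`. The integral of `t^{-1/2} e^{-α L t / 2}`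
over `(0, r]` is at most `2 √r ≤ √(2 / α)`, which suffices when `L ≤ 1`, and at most the
complete Gamma integral `√(2 π / (α L))`, which suffices when `L > 1`.
-/

open Matrix
open scoped BigOperators Classical ComplexOrder

namespace QPaper

variable {ι : Type*} [Fintype ι] [DecidableEq ι]

/-- The positive semidefinite square root of a matrix (junk value `0` if the matrix is
not positive semidefinite). -/
noncomputable def psdSqrt (X : Matrix ι ι ℂ) : Matrix ι ι ℂ :=
  if h : X.PosSemidef then
    h.1.eigenvectorUnitary.1 * diagonal (fun i => ((Real.sqrt (h.1.eigenvalues i) : ℝ) : ℂ)) *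
      (star h.1.eigenvectorUnitary : Matrix ι ι ℂ)
  else 0

/-- The normalized trace (Schatten 1) norm `‖X‖₁ = tr |X| / card ι`. -/
noncomputable def normOne (X : Matrix ι ι ℂ) : ℝ :=
  (psdSqrt (Xᴴ * X)).trace.re / Fintype.card ι

/-- The normalized Schatten 2 norm `‖X‖₂ = (tr (X* X) / card ι)^{1/2}`. -/
noncomputable def normTwo (X : Matrix ι ι ℂ) : ℝ :=
  Real.sqrt ((Xᴴ * X).trace.re / Fintype.card ι)

/-- The operator norm of a matrix, acting on the Euclidean space. -/
noncomputable def opNorm (X : Matrix ι ι ℂ) : ℝ :=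
  ‖Matrix.toEuclideanCLM (𝕜 := ℂ) X‖

/-- The Loewner order: `X ≤ Y` iff `Y - X` is positive semidefinite. -/
def LoewnerLE (X Y : Matrix ι ι ℂ) : Prop := (Y - X).PosSemidef

/-- Configurations of `n` qubits. -/
abbrev QState (n : ℕ) := Fin n → Fin 2

/-- The algebra of `n`-qubit observables `M₂(ℂ)^{⊗ n}`. -/
abbrev Obs (n : ℕ) := Matrix (QState n) (QState n) ℂ

/-- The conditional expectation `E_S = ⊗_{j ∈ S} (½ tr)(·) 𝟏 ⊗ id` replacing each qubit in `S`
by its normalized partial trace:  `E_S(A) = 2^{-|S|} tr_S(A) ⊗ 𝟏_S`. -/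
noncomputable def ESet {n : ℕ} (S : Finset (Fin n)) (A : Obs n) : Obs n :=
  Matrix.of fun x y =>
    if ∀ j ∈ S, x j = y j then
      ((2 : ℂ) ^ n)⁻¹ *
        ∑ z : QState n,
          A (fun j => if j ∈ S then z j else x j) (fun j => if j ∈ S then z j else y j)
    else 0

/-- The derivation `d_j = 𝕀^{⊗(j-1)} ⊗ (𝕀 - ½ tr(·) 𝟏) ⊗ 𝕀^{⊗(n-j)}`. -/
noncomputable def dCoord {n : ℕ} (j : Fin n) (A : Obs n) : Obs n := A - ESet {j} A

/-- The quantum depolarizing semigroup `P_t = (e^{-t} 𝕀 + (1 - e^{-t}) ½ tr(·) 𝟏)^{⊗ n}`. -/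
noncomputable def Pt {n : ℕ} (t : ℝ) (A : Obs n) : Obs n :=
  ∑ S : Finset (Fin n),
    (Real.exp (-t) ^ (n - S.card) * (1 - Real.exp (-t)) ^ S.card) • ESet S A

/-- The generator `𝓛 = ∑_j d_j`. -/
noncomputable def Lgen {n : ℕ} (A : Obs n) : Obs n := ∑ j : Fin n, dCoord j A

/-- The carré du champ `Γ(A) = ½ (𝓛(A*) A + A* 𝓛(A) - 𝓛(A* A))`. -/
noncomputable def carre {n : ℕ} (A : Obs n) : Obs n :=
  (2 : ℂ)⁻¹ • (Lgen Aᴴ * A + Aᴴ * Lgen A - Lgen (Aᴴ * A))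

/-- The total `L¹`-influence `Inf¹(A) = ∑_j ‖d_j A‖₁`. -/
noncomputable def inf1 {n : ℕ} (A : Obs n) : ℝ := ∑ j : Fin n, normOne (dCoord j A)

/-- The total `L²`-influence `Inf²(A) = ∑_j ‖d_j A‖₂²`. -/
noncomputable def inf2 {n : ℕ} (A : Obs n) : ℝ := ∑ j : Fin n, normTwo (dCoord j A) ^ 2

/-- The mean part `2^{-n} tr(A) 𝟏`. -/
noncomputable def meanPart {n : ℕ} (A : Obs n) : Obs n :=
  (A.trace / (2 : ℂ) ^ n) • (1 : Obs n)

/-- The variance `Var(A) = ‖A - 2^{-n} tr(A) 𝟏‖₂²`. -/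
noncomputable def Var {n : ℕ} (A : Obs n) : ℝ := normTwo (A - meanPart A) ^ 2

open Real MeasureTheory Set

lemma exp_neg_le_one_sub_half {u : ℝ} (h0 : 0 ≤ u) (h1 : u ≤ 1) : exp (-u) ≤ 1 - u / 2 := by
  have h : exp (-u) ≤ 1 / (1 + u) := by
    rw [exp_neg, one_div]
    exact inv_anti₀ (by linarith) (by linarith [add_one_le_exp u])
  have h' : 1 / (1 + u) ≤ 1 - u / 2 := by
    rw [div_le_iff₀ (by linarith)]
    nlinarith
  exact h.trans h'

lemma one_half_le_one_div_one_add_exp_neg {x : ℝ} (hx : 0 ≤ x) : 1 / 2 ≤ 1 / (1 + exp (-x)) :=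
  one_div_le_one_div_of_le (by positivity) (by linarith [exp_le_one_iff.2 (neg_nonpos.2 hx)])

lemma two_div_one_add_exp_neg_sub_one_le_one (x : ℝ) : 2 / (1 + exp (-x)) - 1 ≤ 1 := by
  rw [sub_le_iff_le_add, div_le_iff₀ (by positivity)]
  linarith [exp_pos (-x)]

lemma div_four_le_two_div_one_add_exp_neg_sub_one {x : ℝ} (h0 : 0 ≤ x) (h1 : x ≤ 1) :
    x / 4 ≤ 2 / (1 + exp (-x)) - 1 := by
  have hx : x / 2 ≤ 1 - exp (-x) := by linarith [exp_neg_le_one_sub_half h0 h1]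
  have hp : 1 + exp (-x) ≤ 2 := by linarith [exp_le_one_iff.2 (neg_nonpos.2 h0)]
  calc x / 4 ≤ (1 - exp (-x)) / 2 := by linarith
    _ ≤ (1 - exp (-x)) / (1 + exp (-x)) :=
      div_le_div_of_nonneg_left (by linarith) (by positivity) hp
    _ = 2 / (1 + exp (-x)) - 1 := by
      field_simp
      ring

lemma rpow_le_one_add_mul_exp_neg_mul_posLog {a s e : ℝ} (ha : 0 ≤ a) (hse : s ≤ e)
    (he : e ≤ 1) : a ^ e ≤ (1 + a) * exp (-(s * log⁺ (1 / a))) := by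
  rcases ha.eq_or_lt with rfl | ha0
  · simpa using zero_rpow_le_one e
  rcases le_or_gt 1 a with ha1 | ha1
  · have hlog : log⁺ (1 / a) = 0 := by
      rw [posLog_eq_zero_iff, abs_of_pos (by positivity)]
      exact div_le_one_of_le₀ ha1 ha0.le
    rw [hlog, mul_zero, neg_zero, exp_zero, mul_one]
    calc a ^ e ≤ a ^ (1 : ℝ) := rpow_le_rpow_of_exponent_le ha1 he
      _ ≤ 1 + a := by rw [rpow_one]; linarith
  · have hlog : log⁺ (1 / a) = -log a := by
      rw [posLog_eq_log (by rw [abs_of_pos (by positivity)]; exact one_le_one_div ha0 ha1.le),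
        one_div, log_inv]
    have hloga : log a ≤ 0 := log_nonpos ha ha1.le
    calc a ^ e = exp (log a * e) := rpow_def_of_pos ha0 e
      _ ≤ exp (-(s * log⁺ (1 / a))) := exp_le_exp.2 (by rw [hlog]; nlinarith)
      _ ≤ (1 + a) * exp (-(s * log⁺ (1 / a))) := le_mul_of_one_le_left (exp_pos _).le (by linarith)

lemma rpow_mul_rpow_two_div_one_add_exp_neg_le {a t x : ℝ} (ha : 0 ≤ a) (ht0 : 0 < t)
    (ht1 : t ≤ 1) (hx0 : 0 ≤ x) (hx1 : x ≤ 1) :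
    t ^ (-(1 - 1 / (1 + exp (-x)))) * a ^ (2 / (1 + exp (-x)) - 1) ≤
      t ^ (-(1 / 2 : ℝ)) * ((1 + a) * exp (-(x / 4 * log⁺ (1 / a)))) := by
  have hexp : -(1 / 2 : ℝ) ≤ -(1 - 1 / (1 + exp (-x))) := by
    linarith [one_half_le_one_div_one_add_exp_neg hx0]
  gcongr ?_ * ?_
  · exact rpow_le_rpow_of_exponent_ge ht0 ht1 hexp
  · exact rpow_le_one_add_mul_exp_neg_mul_posLog ha
      (div_four_le_two_div_one_add_exp_neg_sub_one hx0 hx1)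
      (two_div_one_add_exp_neg_sub_one_le_one x)

lemma intervalIntegrable_rpow_neg_half_mul_exp (β r : ℝ) :
    IntervalIntegrable (fun t => t ^ (-(1 / 2 : ℝ)) * exp (-(β * t))) volume 0 r :=
  (intervalIntegral.intervalIntegrable_rpow' (by norm_num)).mul_continuousOn (by fun_prop)

lemma integral_mono_of_nonneg_on_Ioc {f g : ℝ → ℝ} {a b : ℝ} (hab : a ≤ b)
    (hg : IntervalIntegrable g volume a b) (hf : ∀ t ∈ Ioc a b, 0 ≤ f t)
    (hfg : ∀ t ∈ Ioc a b, f t ≤ g t) : ∫ t in a..b, f t ≤ ∫ t in a..b, g t := by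
  rw [intervalIntegral.integral_of_le hab, intervalIntegral.integral_of_le hab]
  exact integral_mono_of_nonneg (ae_restrict_of_forall_mem measurableSet_Ioc hf)
    ((intervalIntegrable_iff_integrableOn_Ioc_of_le hab).1 hg)
    (ae_restrict_of_forall_mem measurableSet_Ioc hfg)

lemma integral_rpow_neg_half_mul_exp_le_sqrt {β r : ℝ} (hβ : 0 ≤ β) (hr : 0 ≤ r) :
    ∫ t in 0..r, t ^ (-(1 / 2 : ℝ)) * exp (-(β * t)) ≤ √(4 * r) := by
  calc ∫ t in 0..r, t ^ (-(1 / 2 : ℝ)) * exp (-(β * t))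
      ≤ ∫ t in 0..r, t ^ (-(1 / 2 : ℝ)) :=
        intervalIntegral.integral_mono_on hr (intervalIntegrable_rpow_neg_half_mul_exp β r)
          (intervalIntegral.intervalIntegrable_rpow' (by norm_num)) fun t ht =>
            mul_le_of_le_one_right (rpow_nonneg ht.1 _)
              (exp_le_one_iff.2 (by nlinarith [ht.1]))
    _ = √(4 * r) := by
      rw [integral_rpow (Or.inl (by norm_num)), zero_rpow (by norm_num), sqrt_mul' _ hr,
        sqrt_eq_rpow r, show √(4 : ℝ) = 2 by norm_num]
      norm_num
      ring

lemma integral_rpow_neg_half_mul_exp_le_sqrt_pi_div {β r : ℝ} (hβ : 0 < β) (hr : 0 ≤ r) :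
    ∫ t in 0..r, t ^ (-(1 / 2 : ℝ)) * exp (-(β * t)) ≤ √(π / β) := by
  have hIoi : IntegrableOn (fun t => t ^ (-(1 / 2 : ℝ)) * exp (-(β * t))) (Ioi 0) := by
    simpa using integrableOn_rpow_mul_exp_neg_mul_rpow (s := -(1 / 2)) (by norm_num) one_pos hβ
  have hGamma := integral_rpow_mul_exp_neg_mul_Ioi (a := 1 / 2) (by norm_num) hβ
  rw [Gamma_one_half_eq, show (1 / 2 : ℝ) - 1 = -(1 / 2) by norm_num, ← sqrt_eq_rpow,
    ← sqrt_mul (by positivity), one_div_mul_eq_div] at hGamma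
  rw [intervalIntegral.integral_of_le hr, ← hGamma]
  exact setIntegral_mono_set hIoi
    (ae_restrict_of_forall_mem measurableSet_Ioi fun t (ht : 0 < t) => by positivity)
    Ioc_subset_Ioi_self.eventuallyLE

lemma integral_rpow_neg_half_mul_exp_le {α L r : ℝ} (hα : 0 < α) (hL : 0 ≤ L) (hr0 : 0 ≤ r)
    (hr : r ≤ 1 / (2 * α)) :
    ∫ t in 0..r, t ^ (-(1 / 2 : ℝ)) * exp (-(α * L / 2 * t)) ≤ 1 / √α * (4 / √(1 + L)) := by
  have hrα : r * α ≤ 1 / 2 := by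
    rw [le_div_iff₀ (by positivity)] at hr
    linarith
  have hrhs : 1 / √α * (4 / √(1 + L)) = √(16 / (α * (1 + L))) := by
    rw [sqrt_div' _ (by positivity), sqrt_mul hα.le, show √(16 : ℝ) = 4 by norm_num]
    field_simp
  rw [hrhs]
  rcases le_or_gt L 1 with hL1 | hL1
  · refine (integral_rpow_neg_half_mul_exp_le_sqrt (by positivity) hr0).trans (sqrt_le_sqrt ?_)
    rw [le_div_iff₀ (by positivity)]
    nlinarith [mul_le_mul_of_nonneg_left hL1 (mul_nonneg hr0 hα.le)]
  · refine (integral_rpow_neg_half_mul_exp_le_sqrt_pi_div (by positivity) hr0).trans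
      (sqrt_le_sqrt ?_)
    rw [div_le_div_iff₀ (by positivity) (by positivity)]
    nlinarith [mul_le_mul_of_nonneg_right pi_le_four (by positivity : 0 ≤ α * (1 + L))]

/-- There exists a universal `C > 0` such that for all `α > 0`, `a ≥ 0`,
`p(t) = 1 + e^{−2αt}` and `0 ≤ r ≤ min {1, 1/(2α)}`,
`∫₀^r t^{−(1−1/p(t))} a^{2/p(t)−1} dt ≤ (1/√α) · C(1+a)/(1 + log⁺(1/a))^{1/2}`. -/
theorem integral_bound :
    ∃ C : ℝ, 0 < C ∧ ∀ α : ℝ, 0 < α → ∀ a : ℝ, 0 ≤ a → ∀ r : ℝ, 0 ≤ r →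
      r ≤ min 1 (1 / (2 * α)) →
      (∫ t in (0 : ℝ)..r,
          t ^ (-(1 - 1 / (1 + Real.exp (-(2 * α * t))))) *
            a ^ (2 / (1 + Real.exp (-(2 * α * t))) - 1)) ≤
        (1 / Real.sqrt α) *
          (C * (1 + a) / Real.sqrt (1 + (Real.log (1 / a) ⊔ 0))) := by
  refine ⟨4, four_pos, fun α hα a ha r hr0 hr => ?_⟩
  have hr1 : r ≤ 1 := hr.trans (min_le_left _ _)
  have hr2 : r ≤ 1 / (2 * α) := hr.trans (min_le_right _ _)
  rw [sup_comm, ← posLog_apply]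
  set L := log⁺ (1 / a)
  have hpointwise : ∀ t ∈ Ioc 0 r,
      t ^ (-(1 - 1 / (1 + exp (-(2 * α * t))))) * a ^ (2 / (1 + exp (-(2 * α * t))) - 1) ≤
        (1 + a) * (t ^ (-(1 / 2 : ℝ)) * exp (-(α * L / 2 * t))) := by
    intro t ⟨ht0, htr⟩
    have h2αt : 2 * α * t ≤ 1 := by
      rw [le_div_iff₀ (by positivity)] at hr2
      nlinarith
    refine (rpow_mul_rpow_two_div_one_add_exp_neg_le ha ht0 (htr.trans hr1) (by positivity)
      h2αt).trans_eq ?_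
    simp only [L]
    ring_nf
  calc _ ≤ ∫ t in 0..r, (1 + a) * (t ^ (-(1 / 2 : ℝ)) * exp (-(α * L / 2 * t))) :=
        integral_mono_of_nonneg_on_Ioc hr0
          ((intervalIntegrable_rpow_neg_half_mul_exp _ r).const_mul _)
          (fun t ht => by have := ht.1; positivity) hpointwise
    _ = (1 + a) * ∫ t in 0..r, t ^ (-(1 / 2 : ℝ)) * exp (-(α * L / 2 * t)) :=
        intervalIntegral.integral_const_mul _ _
    _ ≤ (1 + a) * (1 / √α * (4 / √(1 + L))) := by
        gcongr
        exact integral_rpow_neg_half_mul_exp_le hα posLog_nonneg hr0 hr2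
    _ = _ := by ring

end QPaper
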